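/- Let V, W be finite-dimensional complex Hermitian vector spaces. Every solution (B₁, B₂, i, j) of the ADHM equations [B₁,B₂] + ij = 0 and [B₁,B₁†] + [B₂,B₂†] + ii† − j†j = ξ·1_V with ξ < 0 is costable. -/

import Mathlib

set_option linter.unusedSectionVars false
set_option maxHeartbeats 1000000

variable {V W : Type*} [NormedAddCommGroup V] [InnerProductSpace ℂ V]
  [NormedAddCommGroup W] [InnerProductSpace ℂ W]
  [FiniteDimensional ℂ V] [FiniteDimensional ℂ W]

open LinearMap in
lemma my_trace_eq_sum_inner (f : V →ₗ[ℂ] V) :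
    trace ℂ V f = ∑ k, (inner ℂ ((stdOrthonormalBasis ℂ V) k) (f ((stdOrthonormalBasis ℂ V) k)) : ℂ) := by
  set b := stdOrthonormalBasis ℂ V with hb
  rw [trace_eq_matrix_trace ℂ b.toBasis, Matrix.trace]
  congr 1; ext k
  rw [Matrix.diag_apply, LinearMap.toMatrix_apply, OrthonormalBasis.coe_toBasis,
    OrthonormalBasis.coe_toBasis_repr_apply, b.repr_apply_apply]

noncomputable def myT (A : V →ₗ[ℂ] W) : ℝ :=
  ∑ k, ‖A ((stdOrthonormalBasis ℂ V) k)‖ ^ 2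

lemma myT_nonneg (A : V →ₗ[ℂ] W) : 0 ≤ myT A :=
  Finset.sum_nonneg fun _ _ => sq_nonneg _

lemma trace_adjoint_comp (A : V →ₗ[ℂ] W) :
    LinearMap.trace ℂ V (LinearMap.adjoint A ∘ₗ A) = (myT A : ℂ) := by
  rw [my_trace_eq_sum_inner, myT]
  push_cast
  congr 1; ext k
  simp only [Function.comp_apply, LinearMap.coe_comp]
  rw [LinearMap.adjoint_inner_right, inner_self_eq_norm_sq_to_K]
  norm_cast

lemma trace_comp_proj (Q : V →ₗ[ℂ] V) (hQa : LinearMap.adjoint Q = Q)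
    (hQ2 : Q ∘ₗ Q = Q) (A : V →ₗ[ℂ] W) :
    (myT (A ∘ₗ Q) : ℂ) = LinearMap.trace ℂ V ((LinearMap.adjoint A ∘ₗ A) ∘ₗ Q) := by
  rw [← trace_adjoint_comp, LinearMap.adjoint_comp, hQa]
  calc LinearMap.trace ℂ V ((Q ∘ₗ LinearMap.adjoint A) ∘ₗ (A ∘ₗ Q))
      = LinearMap.trace ℂ W ((A ∘ₗ Q) ∘ₗ (Q ∘ₗ LinearMap.adjoint A)) :=
        LinearMap.trace_comp_comm' _ _
    _ = LinearMap.trace ℂ W ((A ∘ₗ Q) ∘ₗ LinearMap.adjoint A) := by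
        rw [show (A ∘ₗ Q) ∘ₗ (Q ∘ₗ LinearMap.adjoint A) = (A ∘ₗ (Q ∘ₗ Q)) ∘ₗ LinearMap.adjoint A by
          simp [LinearMap.comp_assoc], hQ2]
    _ = LinearMap.trace ℂ V (LinearMap.adjoint A ∘ₗ (A ∘ₗ Q)) :=
        (LinearMap.trace_comp_comm' _ _).symm
    _ = LinearMap.trace ℂ V ((LinearMap.adjoint A ∘ₗ A) ∘ₗ Q) := by
        rw [LinearMap.comp_assoc]

lemma myT_split (P : V →ₗ[ℂ] V) (hPa : LinearMap.adjoint P = P)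
    (hP2 : P ∘ₗ P = P) (A : V →ₗ[ℂ] W) :
    myT (A ∘ₗ P) + myT (A ∘ₗ (LinearMap.id - P)) = myT A := by
  have hQa : LinearMap.adjoint (LinearMap.id - P : V →ₗ[ℂ] V) = LinearMap.id - P := by
    have hid : LinearMap.adjoint (LinearMap.id : V →ₗ[ℂ] V) = LinearMap.id := by
      rw [← Module.End.one_eq_id, ← LinearMap.star_eq_adjoint, star_one]
    rw [map_sub, hPa, hid]
  have hQ2 : (LinearMap.id - P : V →ₗ[ℂ] V) ∘ₗ (LinearMap.id - P) = LinearMap.id - P := by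
    simp only [LinearMap.sub_comp, LinearMap.comp_sub, LinearMap.id_comp, LinearMap.comp_id, hP2]
    abel
  have := trace_comp_proj P hPa hP2 A
  have h2 := trace_comp_proj (LinearMap.id - P) hQa hQ2 A
  have hsum : (myT (A ∘ₗ P) : ℂ) + (myT (A ∘ₗ (LinearMap.id - P)) : ℂ) = (myT A : ℂ) := by
    rw [this, h2, ← map_add, ← LinearMap.comp_add]
    simp [trace_adjoint_comp]
  exact_mod_cast hsum

lemma myT_comp_proj_le (P : V →ₗ[ℂ] V) (hPa : LinearMap.adjoint P = P)
    (hP2 : P ∘ₗ P = P) (A : V →ₗ[ℂ] W) : myT (A ∘ₗ P) ≤ myT A := by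
  have := myT_split P hPa hP2 A
  have := myT_nonneg (A ∘ₗ (LinearMap.id - P))
  linarith

lemma trace_piece (P : V →ₗ[ℂ] V) (hPa : LinearMap.adjoint P = P)
    (X : V →ₗ[ℂ] W) :
    LinearMap.trace ℂ V (P ∘ₗ (LinearMap.adjoint X ∘ₗ X) ∘ₗ P) = (myT (X ∘ₗ P) : ℂ) := by
  rw [← trace_adjoint_comp (X ∘ₗ P), LinearMap.adjoint_comp, hPa]
  congr 1

def ADHMCostable (B₁ B₂ : V →ₗ[ℂ] V) (j : V →ₗ[ℂ] W) : Prop :=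
  ∀ S : Submodule ℂ V, S ≠ ⊥ → (∀ v ∈ S, B₁ v ∈ S) → (∀ v ∈ S, B₂ v ∈ S) →
    ¬ S ≤ LinearMap.ker j

theorem adhm_xi_neg_costable (B₁ B₂ : V →ₗ[ℂ] V) (i : W →ₗ[ℂ] V) (j : V →ₗ[ℂ] W)
    (ξ : ℝ) (hξ : ξ < 0)
    (h1 : B₁ ∘ₗ B₂ - B₂ ∘ₗ B₁ + i ∘ₗ j = 0)
    (h2 : B₁ ∘ₗ LinearMap.adjoint B₁ - LinearMap.adjoint B₁ ∘ₗ B₁ +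
          (B₂ ∘ₗ LinearMap.adjoint B₂ - LinearMap.adjoint B₂ ∘ₗ B₂) +
          i ∘ₗ LinearMap.adjoint i - LinearMap.adjoint j ∘ₗ j =
          (ξ : ℂ) • (LinearMap.id : V →ₗ[ℂ] V)) :
    ADHMCostable B₁ B₂ j := by
  intro S hSbot hB1 hB2 hker
  haveI : CompleteSpace S := FiniteDimensional.complete ℂ S
  set P : V →ₗ[ℂ] V := S.subtype ∘ₗ (Submodule.orthogonalProjectionOnto S).toLinearMap with hPdef
  have hPmem : ∀ v : V, P v ∈ S := fun v => (Submodule.orthogonalProjectionOnto S v).2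
  have hPfix : ∀ v ∈ S, P v = v := by
    intro v hv
    show ((Submodule.orthogonalProjectionOnto S v : S) : V) = v
    rw [show v = ((⟨v, hv⟩ : S) : V) from rfl, Submodule.orthogonalProjectionOnto_mem_subspace_eq_self]
  have hP2 : P ∘ₗ P = P := by
    ext v; exact hPfix _ (hPmem v)
  have hPa : LinearMap.adjoint P = P := by
    symm
    rw [LinearMap.eq_adjoint_iff]
    intro x y
    exact Submodule.inner_starProjection_left_eq_right S x y
  have hjP : j ∘ₗ P = 0 := by
    ext v; exact hker (hPmem v)
  have hBP : ∀ B : V →ₗ[ℂ] V, (∀ v ∈ S, B v ∈ S) → B ∘ₗ P = (P ∘ₗ B) ∘ₗ P := by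
    intro B hB
    ext v
    exact (hPfix _ (hB _ (hPmem v))).symm
  -- trace of the moment map equation compressed by P
  have key := congrArg (fun f => LinearMap.trace ℂ V (P ∘ₗ f ∘ₗ P)) h2
  simp only [LinearMap.comp_add, LinearMap.add_comp, LinearMap.comp_sub, LinearMap.sub_comp,
    map_add, map_sub] at key
  have e1 := trace_piece P hPa (LinearMap.adjoint B₁)
  have e2 := trace_piece P hPa B₁
  have e3 := trace_piece P hPa (LinearMap.adjoint B₂)
  have e4 := trace_piece P hPa B₂
  have e5 := trace_piece P hPa (LinearMap.adjoint i)
  have e6 := trace_piece P hPa j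
  rw [LinearMap.adjoint_adjoint] at e1 e3 e5
  -- right-hand side
  have hRHS : LinearMap.trace ℂ V (P ∘ₗ ((ξ : ℂ) • (LinearMap.id : V →ₗ[ℂ] V)) ∘ₗ P) =
      (ξ : ℂ) * (Module.finrank ℂ S : ℂ) := by
    have hps : P ∘ₗ ((ξ : ℂ) • (LinearMap.id : V →ₗ[ℂ] V)) ∘ₗ P = (ξ : ℂ) • P := by
      ext v
      simp only [LinearMap.comp_apply, LinearMap.smul_apply, LinearMap.id_apply, map_smul]
      rw [hPfix _ (hPmem v)]
    rw [hps, map_smul, smul_eq_mul]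
    congr 1
    have hcomm : LinearMap.trace ℂ V (S.subtype ∘ₗ (Submodule.orthogonalProjectionOnto S).toLinearMap) =
        LinearMap.trace ℂ S ((Submodule.orthogonalProjectionOnto S).toLinearMap ∘ₗ S.subtype) :=
      LinearMap.trace_comp_comm' _ _
    have hid : (Submodule.orthogonalProjectionOnto S).toLinearMap ∘ₗ S.subtype = LinearMap.id := by
      ext x
      simp [Submodule.orthogonalProjectionOnto_mem_subspace_eq_self]
    rw [hPdef, hcomm, hid, LinearMap.trace_id]
  rw [e1, e2, e3, e4, e5, e6, hRHS, hjP] at key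
  have hz : myT ((0 : V →ₗ[ℂ] W)) = 0 := by simp [myT]
  rw [hz] at key
  -- turn into a real equation
  have hreal : myT (LinearMap.adjoint B₁ ∘ₗ P) - myT (B₁ ∘ₗ P) +
      (myT (LinearMap.adjoint B₂ ∘ₗ P) - myT (B₂ ∘ₗ P)) +
      myT (LinearMap.adjoint i ∘ₗ P) - 0 = ξ * (Module.finrank ℂ S : ℝ) := by
    exact_mod_cast key
  -- inequalities
  have hle : ∀ B : V →ₗ[ℂ] V, (∀ v ∈ S, B v ∈ S) →
      myT (B ∘ₗ P) ≤ myT (LinearMap.adjoint B ∘ₗ P) := by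
    intro B hB
    have heq : myT (LinearMap.adjoint B ∘ₗ P) = myT (P ∘ₗ B) := by
      have c1 := trace_comp_proj P hPa hP2 (LinearMap.adjoint B)
      rw [LinearMap.adjoint_adjoint] at c1
      have c2 : (myT (P ∘ₗ B) : ℂ) =
          LinearMap.trace ℂ V ((LinearMap.adjoint B ∘ₗ P) ∘ₗ (P ∘ₗ B)) := by
        rw [← trace_adjoint_comp, LinearMap.adjoint_comp, hPa]
      have hcol : (LinearMap.adjoint B ∘ₗ P) ∘ₗ (P ∘ₗ B) =
          LinearMap.adjoint B ∘ₗ (P ∘ₗ B) := by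
        rw [show (LinearMap.adjoint B ∘ₗ P) ∘ₗ (P ∘ₗ B) =
          LinearMap.adjoint B ∘ₗ ((P ∘ₗ P) ∘ₗ B) by simp [LinearMap.comp_assoc], hP2]
      have hcyc : LinearMap.trace ℂ V (LinearMap.adjoint B ∘ₗ (P ∘ₗ B)) =
          LinearMap.trace ℂ V ((B ∘ₗ LinearMap.adjoint B) ∘ₗ P) := by
        rw [LinearMap.trace_comp_comm' (P ∘ₗ B) (LinearMap.adjoint B),
          LinearMap.comp_assoc, LinearMap.trace_comp_comm' P (B ∘ₗ LinearMap.adjoint B)]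
      have hfin : (myT (LinearMap.adjoint B ∘ₗ P) : ℂ) = (myT (P ∘ₗ B) : ℂ) := by
        rw [c1, c2, hcol, hcyc]
      exact_mod_cast hfin
    rw [heq, hBP B hB]
    exact myT_comp_proj_le P hPa hP2 (P ∘ₗ B)
  have h1le := hle B₁ hB1
  have h2le := hle B₂ hB2
  have hi := myT_nonneg (LinearMap.adjoint i ∘ₗ P)
  have hn : 0 < (Module.finrank ℂ S : ℝ) := by
    have h1' : 1 ≤ Module.finrank ℂ S := Submodule.one_le_finrank_iff.mpr hSbot
    exact_mod_cast Nat.lt_of_lt_of_le Nat.zero_lt_one h1'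
  nlinarith [mul_neg_of_neg_of_pos hξ hn]
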